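/- Let (A, ∘, r) be a group with braiding arising from a skew brace (A, ∘, ·), and A ⋈ A the twisted product group on A × A. Then ι: (A, ·) → A ⋈ A, a ↦ (a, ā), is an injective group homomorphism whose image is the kernel of the homomorphism m_A: A ⋈ A → (A, ∘), (a, b) ↦ a ∘ b. -/

import Mathlib

structure SkewBrace (A : Type*) where
  circ : A → A → A
  cinv : A → A
  ce : A
  mul : A → A → A
  inv : A → A
  e : A
  circ_assoc : ∀ a b c, circ (circ a b) c = circ a (circ b c)
  ce_circ : ∀ a, circ ce a = a
  circ_ce : ∀ a, circ a ce = a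
  cinv_circ : ∀ a, circ (cinv a) a = ce
  circ_cinv : ∀ a, circ a (cinv a) = ce
  mul_assoc : ∀ a b c, mul (mul a b) c = mul a (mul b c)
  e_mul : ∀ a, mul e a = a
  mul_e : ∀ a, mul a e = a
  inv_mul : ∀ a, mul (inv a) a = e
  mul_inv : ∀ a, mul a (inv a) = e
  distrib : ∀ a b c, circ a (mul b c) = mul (mul (circ a b) (inv a)) (circ a c)

def SkewBrace.lam {A : Type*} (B : SkewBrace A) (a b : A) : A :=
  B.mul (B.inv a) (B.circ a b)

def SkewBrace.rho {A : Type*} (B : SkewBrace A) (a b : A) : A :=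
  B.mul (B.circ a b) (B.inv a)

/-!
The neutral elements of `(A, ·)` and `(A, ∘)` coincide, and expanding `a ∘ (ā · ā⁻¹)` by the
brace law gives `a ∘ ā⁻¹ = a · a`. Hence `a ∘ λ_ā(b) = a · b`, so the first component of
`(a, ā) ∘_⋈ (b, b̄)` is `a · b`, and its second component `(λ_ā(b))‾ ∘ ā ∘ b ∘ b̄` collapses to
`(a ∘ λ_ā(b))‾ = (a · b)‾`. The kernel of `m_A` is the graph of `x ↦ x̄`.
-/

namespace SkewBrace

variable {A : Type*} (B : SkewBrace A)

lemma mul_left_cancel {a b c : A} (h : B.mul a b = B.mul a c) : b = c := by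
  have h' := congrArg (B.mul (B.inv a)) h
  rwa [← B.mul_assoc, ← B.mul_assoc, B.inv_mul, B.e_mul, B.e_mul] at h'

lemma circ_e (a : A) : B.circ a B.e = a := by
  have h : B.mul (B.circ a B.e) B.e
      = B.mul (B.circ a B.e) (B.mul (B.inv a) (B.circ a B.e)) := by
    rw [B.mul_e, ← B.mul_assoc, ← B.distrib, B.mul_e]
  have h' := congrArg (B.mul a) (B.mul_left_cancel h)
  rwa [B.mul_e, ← B.mul_assoc, B.mul_inv, B.e_mul, eq_comm] at h'

lemma ce_eq_e : B.ce = B.e := (B.circ_e B.ce).symm.trans (B.ce_circ B.e)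

lemma circ_inv_cinv (a : A) : B.circ a (B.inv (B.cinv a)) = B.mul a a := by
  have h := B.distrib a (B.cinv a) (B.inv (B.cinv a))
  rw [B.mul_inv, B.circ_e, B.circ_cinv, B.ce_eq_e, B.e_mul] at h
  have h' := congrArg (B.mul a) h
  rwa [← B.mul_assoc, B.mul_inv, B.e_mul, eq_comm] at h'

lemma circ_lam_cinv (a b : A) : B.circ a (B.lam (B.cinv a) b) = B.mul a b := by
  rw [lam, B.distrib, B.circ_inv_cinv, ← B.circ_assoc, B.circ_cinv, B.ce_circ,
    B.mul_assoc a a, B.mul_inv, B.mul_e]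

lemma circ_eq_ce_iff {a b : A} : B.circ a b = B.ce ↔ b = B.cinv a := by
  constructor
  · intro h
    have h' := congrArg (B.circ (B.cinv a)) h
    rwa [← B.circ_assoc, B.cinv_circ, B.ce_circ, B.circ_ce] at h'
  · rintro rfl
    exact B.circ_cinv a

lemma cinv_circ_rev (a b : A) : B.cinv (B.circ a b) = B.circ (B.cinv b) (B.cinv a) := by
  refine ((B.circ_eq_ce_iff).mp ?_).symm
  rw [B.circ_assoc, ← B.circ_assoc b, B.circ_cinv, B.ce_circ, B.circ_cinv]

end SkewBrace

/-- `ι : (A, ·) → A ⋈ A, a ↦ (a, ā)` is an injective group homomorphism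
whose image is the kernel of the multiplication map `m_A : A ⋈ A → (A, ∘)`. -/
theorem iota_kernel {A : Type*} (B : SkewBrace A)
    (r : A × A → A × A)
    (hr : ∀ a b, r (a, b) =
      (B.lam a b, B.circ (B.cinv (B.lam a b)) (B.circ a b)))
    (tm : A × A → A × A → A × A)
    (htm : ∀ p q, tm p q =
      (B.circ p.1 ((r (p.2, q.1)).1), B.circ ((r (p.2, q.1)).2) q.2)) :
    Function.Injective (fun a : A => (a, B.cinv a)) ∧
    (∀ a b, tm (a, B.cinv a) (b, B.cinv b) = (B.mul a b, B.cinv (B.mul a b))) ∧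
    (∀ p : A × A, B.circ p.1 p.2 = B.ce ↔ ∃ a, p = (a, B.cinv a)) := by
  refine ⟨fun a b h => congrArg Prod.fst h, fun a b => ?_, fun p => ?_⟩
  · rw [htm, hr, B.circ_lam_cinv]
    congr 1
    calc B.circ (B.circ (B.cinv (B.lam (B.cinv a) b)) (B.circ (B.cinv a) b)) (B.cinv b)
        = B.circ (B.cinv (B.lam (B.cinv a) b)) (B.cinv a) := by
          rw [B.circ_assoc, B.circ_assoc, B.circ_cinv, B.circ_ce]
      _ = B.cinv (B.circ a (B.lam (B.cinv a) b)) := (B.cinv_circ_rev _ _).symm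
      _ = B.cinv (B.mul a b) := by rw [B.circ_lam_cinv]
  · rw [B.circ_eq_ce_iff]
    constructor
    · intro h
      exact ⟨p.1, Prod.ext rfl h⟩
    · rintro ⟨a, rfl⟩
      rfl
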